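/- Let q be a prime power, l ≥ 1, t = q^l, and F = GF(t²) (so GF(q) ⊆ GF(t) ⊆ F). Let L = (α₁, …, αₙ) enumerate the set {α ∈ F : α ≠ 0 and α^{t−1} + 1 ≠ 0}. Then the q-ary Goppa codes Γ(L, (X^t + X)^{q−1}) and Γ(L, (X^{t−1} + 1)^{q−1}) coincide; that is, for every c ∈ GF(q)ⁿ, (X^{t−1} + 1)^{q−1} divides Σᵢ cᵢ ∏_{j≠i}(X − αⱼ) in F[X] if and only if (X^t + X)^{q−1} divides Σᵢ cᵢ ∏_{j≠i}(X − αⱼ) in F[X]. -/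

import Mathlib

/-!
Let `t = q^l`, `g = X^{t-1} + 1` and `S = Σᵢ cᵢ ∏_{j≠i}(X - αⱼ)`. Since `X^t + X = X g` and `X` is
coprime to `g`, it suffices to show that `g^{q-1} ∣ S` implies `X^{q-1} ∣ S`.

The roots of `g` are distinct and lie in `F` but not in `L`. At a point `β ∉ L`, `(X - β)^m ∣ S`
says that the moments `Σᵢ cᵢ (αᵢ - β)^{-k}`, `1 ≤ k ≤ m`, vanish. As `cᵢ ∈ GF(q)`, the moment of
order `q` is the `q`-th power of the moment of order `1`, so `g^{q-1} ∣ S` upgrades to `g^q ∣ S`.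
This makes `G(a) = Σᵢ cᵢ αᵢ^a / g(αᵢ)^q` vanish for `0 ≤ a < q(t-1)`. The index of `G` only
matters modulo `t² - 1`, and `G(a)^t = G(ta + q(t-1))` because `αᵢ^{t-1} g(αᵢ)^t = g(αᵢ)`. Finally
`Σᵢ cᵢ αᵢ^{-k} = G(q(t-1) - k) + G(-k)` as `g(αᵢ)^q = αᵢ^{q(t-1)} + 1`, and for `1 ≤ k ≤ q - 1`
both terms vanish: `-k ≡ tb + q(t-1)` with `b = q(t-1) - tk` in the window. So the moments at `0`
vanish, i.e. `X^{q-1} ∣ S`.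
-/

open Polynomial

/-- The syndrome polynomial `Σᵢ cᵢ ∏_{j≠i} (X − αⱼ)` of a word `c ∈ GF(q)ⁿ` with respect to
the locator tuple `α`, with coefficients viewed in the extension field `F`. -/
noncomputable def goppaSum {K F : Type*} [Field K] [Field F] [Algebra K F] {n : ℕ}
    (α : Fin n → F) (c : Fin n → K) : Polynomial F :=
  ∑ i, Polynomial.C (algebraMap K F (c i)) *
    ∏ j ∈ Finset.univ.erase i, (Polynomial.X - Polynomial.C (α j))

open Finset

section Polynomial

variable {R F : Type*} [Field F]

theorem X_mul_X_pow_sub_one_add_one [Semiring R] {t : ℕ} (ht : 1 ≤ t) :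
    (X : R[X]) * (X ^ (t - 1) + 1) = X ^ t + X := by
  rw [mul_add, mul_one, ← pow_succ', Nat.sub_add_cancel ht]

theorem isCoprime_X_sub_C_of_eval_ne_zero {a : F} {g : F[X]} (h : g.eval a ≠ 0) :
    IsCoprime (X - C a) g :=
  (irreducible_X_sub_C a).coprime_iff_not_dvd.2 (by rwa [dvd_iff_isRoot])

theorem isCoprime_X_X_pow_add_one {m : ℕ} (hm : m ≠ 0) : IsCoprime (X : F[X]) (X ^ m + 1) := by
  simpa using isCoprime_X_sub_C_of_eval_ne_zero (a := (0 : F)) (g := X ^ m + 1) (by simp [hm])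

theorem prod_X_sub_C_pow_dvd {B : Finset F} {f : F[X]} {m : ℕ}
    (h : ∀ β ∈ B, (X - C β) ^ m ∣ f) : (∏ β ∈ B, (X - C β)) ^ m ∣ f := by
  rw [← prod_pow]
  exact Finset.prod_dvd_of_coprime
    (fun a _ b _ hab => (pairwise_coprime_X_sub_C Function.injective_id hab).pow) h

theorem X_sub_C_mul_neg_sum_add_eq_one {b : F} (hb : b ≠ 0) (M : ℕ) :
    (X - C b) * -∑ r ∈ range M, C (b⁻¹ ^ (r + 1)) * X ^ r + C (b⁻¹ ^ M) * X ^ M = 1 := by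
  induction M with
  | zero => simp
  | succ M ih =>
    have hb' : C b * C (b⁻¹ ^ (M + 1)) = C (b⁻¹ ^ M) := by
      rw [← C_mul, pow_succ', ← mul_assoc, mul_inv_cancel₀ hb, one_mul]
    rw [sum_range_succ]
    linear_combination ih + X ^ M * hb'

theorem prod_roots_toFinset_X_sub_C_of_dvd_X_pow_card_sub_X [Fintype F] [DecidableEq F]
    {g : F[X]} (hg : g.Monic) (hdvd : g ∣ X ^ Fintype.card F - X) :
    ∏ β ∈ g.roots.toFinset, (X - C β) = g := by
  have hf0 := FiniteField.X_pow_card_sub_X_ne_zero F (Fintype.one_lt_card (α := F))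
  have hsplit : Splits (X ^ Fintype.card F - X : F[X]) := by
    rw [splits_iff_card_roots, FiniteField.roots_X_pow_card_sub_X,
      FiniteField.X_pow_card_sub_X_natDegree_eq F (Fintype.one_lt_card (α := F))]
    simp
  have hnodup : g.roots.Nodup := Multiset.nodup_of_le (roots.le_of_dvd hf0 hdvd)
    (by rw [FiniteField.roots_X_pow_card_sub_X]; exact univ.nodup)
  rw [Finset.prod_eq_multiset_prod, Multiset.toFinset_val, hnodup.dedup]
  exact ((hsplit.of_dvd hf0 hdvd).eq_prod_roots_of_monic hg).symm

end Polynomial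

section GoppaSum

variable {F : Type*} [Field F] {n : ℕ}

theorem goppaSum_algebraMap {K : Type*} [Field K] [Algebra K F] (α : Fin n → F)
    (c : Fin n → K) : goppaSum α (fun i => algebraMap K F (c i)) = goppaSum α c := by
  simp [goppaSum]

theorem goppaSum_comp_X_add_C (α d : Fin n → F) (γ : F) :
    (goppaSum α d).comp (X + C γ) = goppaSum (fun i => α i - γ) d := by
  simp [goppaSum, Polynomial.sum_comp, Polynomial.prod_comp, sub_sub_eq_add_sub]

theorem natDegree_goppaSum_le (α d : Fin n → F) : (goppaSum α d).natDegree ≤ n - 1 :=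
  natDegree_sum_le_of_forall_le _ _ fun i _ =>
    (natDegree_C_mul_le _ _).trans (by simp [card_erase_of_mem])

theorem coeff_goppaSum_sub_one (α d : Fin n → F) :
    (goppaSum α d).coeff (n - 1) = ∑ i, d i := by
  simp only [goppaSum, Algebra.algebraMap_self, RingHom.id_apply, finsetSum_coeff, coeff_C_mul]
  refine sum_congr rfl fun i _ => ?_
  have hmonic := (monic_prod_X_sub_C α (univ.erase i)).coeff_natDegree
  rw [natDegree_finsetProd_X_sub_C_eq_card, card_erase_of_mem (mem_univ i), card_univ,
    Fintype.card_fin] at hmonic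
  rw [hmonic, mul_one]

theorem goppaSum_eq_prod_mul_add_X_pow_mul {β : Fin n → F} (hβ : ∀ i, β i ≠ 0)
    (d : Fin n → F) (M : ℕ) :
    goppaSum β d =
      (∏ j, (X - C (β j))) * -∑ r ∈ range M, C (∑ i, d i * (β i)⁻¹ ^ (r + 1)) * X ^ r +
        X ^ M * goppaSum β (fun i => d i * (β i)⁻¹ ^ M) := by
  have hterm : ∀ i, C (d i) * ∏ j ∈ univ.erase i, (X - C (β j)) =
      (∏ j, (X - C (β j))) * -∑ r ∈ range M, C (d i * (β i)⁻¹ ^ (r + 1)) * X ^ r +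
        X ^ M * (C (d i * (β i)⁻¹ ^ M) * ∏ j ∈ univ.erase i, (X - C (β j))) := by
    intro i
    rw [← mul_prod_erase univ _ (mem_univ i)]
    simp only [C_mul, mul_assoc, ← mul_sum]
    linear_combination -(C (d i) * ∏ j ∈ univ.erase i, (X - C (β j))) *
      X_sub_C_mul_neg_sum_add_eq_one (hβ i) M
  simp only [goppaSum, Algebra.algebraMap_self, RingHom.id_apply]
  rw [sum_congr rfl fun i _ => hterm i, sum_add_distrib, ← mul_sum, ← mul_sum]
  simp only [map_sum, sum_mul, sum_neg_distrib]
  rw [sum_comm]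

theorem X_pow_dvd_goppaSum_iff {β : Fin n → F} (hβ : ∀ i, β i ≠ 0) (d : Fin n → F) (m : ℕ) :
    X ^ m ∣ goppaSum β d ↔ ∀ k < m, ∑ i, d i * (β i)⁻¹ ^ (k + 1) = 0 := by
  have hX : IsCoprime X (∏ j, (X - C (β j))) := by
    have h := isCoprime_X_sub_C_of_eval_ne_zero (a := 0) (g := ∏ j, (X - C (β j)))
      (by rw [eval_prod]; exact prod_ne_zero_iff.2 fun j _ => by simpa using hβ j)
    rwa [C_0, sub_zero] at h
  have hcop : IsCoprime (X ^ m) (∏ j, (X - C (β j))) := IsCoprime.pow_left hX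
  rw [goppaSum_eq_prod_mul_add_X_pow_mul hβ d m, dvd_add_left (dvd_mul_right _ _)]
  refine (Iff.intro hcop.dvd_of_dvd_mul_left (Dvd.dvd.mul_left · _)).trans ?_
  rw [X_pow_dvd_iff]
  refine forall₂_congr fun k hk => ?_
  simp only [coeff_neg, finsetSum_coeff, coeff_C_mul_X_pow, sum_ite_eq, mem_range, hk, if_true,
    neg_eq_zero]

theorem X_sub_C_pow_dvd_goppaSum_iff {α : Fin n → F} {γ : F} (hγ : ∀ i, α i ≠ γ)
    (d : Fin n → F) (m : ℕ) :
    (X - C γ) ^ m ∣ goppaSum α d ↔ ∀ k < m, ∑ i, d i * (α i - γ)⁻¹ ^ (k + 1) = 0 := by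
  rw [← X_pow_dvd_goppaSum_iff (fun i => sub_ne_zero.2 (hγ i)), ← goppaSum_comp_X_add_C,
    ← map_dvd_iff (algEquivAevalXAddC γ)]
  simp [comp_eq_aeval]

theorem exists_prod_mul_eq_mul_goppaSum_sub_mul_goppaSum {α : Fin n → F} (d : Fin n → F)
    {g u : F[X]} (hg : ∀ i, g.eval (α i) ≠ 0) (hu : u.degree < g.degree) :
    ∃ R : F[X], R.degree < g.degree ∧ (∏ j, (X - C (α j))) * R =
      u * goppaSum α d - g * goppaSum α (fun i => d i * u.eval (α i) / g.eval (α i)) := by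
  have hg0 : g ≠ 0 := ne_zero_of_degree_gt hu
  set h : Fin n → F[X] := fun i => (g.eval (α i) • u - u.eval (α i) • g) /ₘ (X - C (α i))
  have hh : ∀ i, (X - C (α i)) * h i = C (g.eval (α i)) * u - C (u.eval (α i)) * g := fun i => by
    rw [← smul_eq_C_mul, ← smul_eq_C_mul]
    exact mul_divByMonic_eq_iff_isRoot.2 (by simp [mul_comm])
  have hh_deg : ∀ i, (h i).degree < g.degree := by
    intro i
    set f := g.eval (α i) • u - u.eval (α i) • g
    rcases eq_or_ne f 0 with hf | hf
    · change (f /ₘ _).degree < _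
      rw [hf, zero_divByMonic, degree_zero]
      exact bot_lt_iff_ne_bot.2 (mt degree_eq_bot.1 hg0)
    refine (degree_divByMonic_lt f _ hf (by rw [degree_X_sub_C]; exact zero_lt_one)).trans_le ?_
    exact (degree_sub_le _ _).trans
      (max_le ((degree_smul_le _ _).trans hu.le) (degree_smul_le _ _))
  refine ⟨∑ i, (d i / g.eval (α i)) • h i, (degree_sum_le _ _).trans_lt <|
    (Finset.sup_lt_iff (bot_lt_iff_ne_bot.2 (mt degree_eq_bot.1 hg0))).2
      fun i _ => (degree_smul_le _ _).trans_lt (hh_deg i), ?_⟩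
  simp only [goppaSum, Algebra.algebraMap_self, RingHom.id_apply, smul_eq_C_mul, mul_sum,
    ← sum_sub_distrib]
  refine sum_congr rfl fun i _ => ?_
  rw [← mul_prod_erase univ _ (mem_univ i)]
  have h1 : C (d i / g.eval (α i)) * C (g.eval (α i)) = C (d i) := by
    rw [← C_mul, div_mul_cancel₀ _ (hg i)]
  have h2 : C (d i / g.eval (α i)) * C (u.eval (α i)) =
      C (d i * u.eval (α i) / g.eval (α i)) := by
    rw [← C_mul, div_mul_eq_mul_div]
  linear_combination (∏ j ∈ univ.erase i, (X - C (α j))) *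
    (C (d i / g.eval (α i)) * hh i + u * h1 - g * h2)

theorem sum_mul_eval_div_eval_eq_zero_of_dvd_goppaSum {α d : Fin n → F} {g u : F[X]}
    (hg : ∀ i, g.eval (α i) ≠ 0) (hdvd : g ∣ goppaSum α d) (hu : u.degree < g.degree) :
    ∑ i, d i * u.eval (α i) / g.eval (α i) = 0 := by
  have hg0 : g ≠ 0 := ne_zero_of_degree_gt hu
  obtain ⟨R, hR_deg, hR⟩ := exists_prod_mul_eq_mul_goppaSum_sub_mul_goppaSum d hg hu
  set e : Fin n → F := fun i => d i * u.eval (α i) / g.eval (α i)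
  have hcop : IsCoprime g (∏ j, (X - C (α j))) :=
    (IsCoprime.prod_left fun i _ => isCoprime_X_sub_C_of_eval_ne_zero (hg i)).symm
  obtain ⟨W, hW⟩ := hdvd
  have hR0 : R = 0 := eq_zero_of_dvd_of_degree_lt
    (hcop.dvd_of_dvd_mul_left ⟨u * W - goppaSum α e, by rw [hR, hW]; ring⟩) hR_deg
  rw [hR0, mul_zero, hW] at hR
  have he : goppaSum α e = u * W :=
    mul_left_cancel₀ hg0 (by linear_combination hR)
  -- the sum is the coefficient of `X^(n-1)` in `u W`, which has degree `< n - 1`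
  rw [← coeff_goppaSum_sub_one α, he]
  rcases eq_or_ne W 0 with rfl | hW0
  · simp
  rcases eq_or_ne u 0 with rfl | hu0
  · simp
  apply coeff_eq_zero_of_natDegree_lt
  calc (u * W).natDegree = u.natDegree + W.natDegree := natDegree_mul hu0 hW0
    _ < g.natDegree + W.natDegree := by gcongr; exact natDegree_lt_natDegree hu0 hu
    _ = (goppaSum α d).natDegree := by rw [hW, natDegree_mul hg0 hW0]
    _ ≤ n - 1 := natDegree_goppaSum_le α d

end GoppaSum

section FiniteField

variable {K F : Type*} [Field K] [Fintype K] [Field F] [Algebra K F] {n : ℕ}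

theorem frobeniusAlgHom_pow_apply {R : Type*} [CommRing R] [Algebra K R] (l : ℕ) (x : R) :
    (FiniteField.frobeniusAlgHom K R ^ l) x = x ^ Fintype.card K ^ l := by
  rw [AlgHom.coe_pow, FiniteField.coe_frobeniusAlgHom, pow_iterate]

theorem zpow_eq_zpow_of_modEq_card_sub_one [Fintype F] {x : F} (hx : x ≠ 0) {a b : ℤ}
    (h : a ≡ b [ZMOD Fintype.card F - 1]) : x ^ a = x ^ b := by
  obtain ⟨r, hr⟩ := Int.modEq_iff_dvd.1 h
  have hunit : x ^ ((Fintype.card F : ℤ) - 1) = 1 := by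
    rw [← Nat.cast_pred Fintype.card_pos, zpow_natCast, FiniteField.pow_card_sub_one_eq_one x hx]
  rw [show b = a + (Fintype.card F - 1) * r by linarith, zpow_add₀ hx, zpow_mul, hunit, one_zpow,
    mul_one]

theorem pow_sub_one_mul_pow_sub_one_add_one_pow [Fintype F] {l : ℕ}
    (hF : Fintype.card F = (Fintype.card K ^ l) ^ 2) {x : F} (hx : x ≠ 0) :
    x ^ (Fintype.card K ^ l - 1) * (x ^ (Fintype.card K ^ l - 1) + 1) ^ Fintype.card K ^ l =
      x ^ (Fintype.card K ^ l - 1) + 1 := by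
  set t := Fintype.card K ^ l
  have ht : 1 ≤ t := Nat.one_le_pow _ _ Fintype.card_pos
  have hunit : x ^ (t - 1) * x ^ ((t - 1) * t) = 1 := by
    rw [← pow_add, ← FiniteField.pow_card_sub_one_eq_one x hx, hF]
    congr 1
    zify [ht, Nat.one_le_pow 2 t ht]
    ring
  rw [← frobeniusAlgHom_pow_apply (K := K), map_add, map_one, frobeniusAlgHom_pow_apply, ← pow_mul,
    mul_add, hunit, mul_one, add_comm]

theorem X_pow_add_X_dvd_X_pow_sq_sub_X (l : ℕ) :
    (X ^ Fintype.card K ^ l + X : F[X]) ∣ X ^ (Fintype.card K ^ l) ^ 2 - X := by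
  set T : F[X] := X ^ Fintype.card K ^ l + X
  have hT : T ^ Fintype.card K ^ l = X ^ (Fintype.card K ^ l) ^ 2 + X ^ Fintype.card K ^ l := by
    rw [← frobeniusAlgHom_pow_apply (K := K), map_add, frobeniusAlgHom_pow_apply,
      frobeniusAlgHom_pow_apply, ← pow_mul, sq]
  rw [show X ^ (Fintype.card K ^ l) ^ 2 - X = T ^ Fintype.card K ^ l - T by rw [hT]; ring]
  exact (dvd_pow_self T (pow_ne_zero _ Fintype.card_ne_zero)).sub dvd_rfl

theorem prod_roots_toFinset_X_sub_C_X_pow_sub_one_add_one [Fintype F] [DecidableEq F] {l : ℕ}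
    (hl : 1 ≤ l) (hF : Fintype.card F = (Fintype.card K ^ l) ^ 2) :
    ∏ β ∈ (X ^ (Fintype.card K ^ l - 1) + 1 : F[X]).roots.toFinset, (X - C β) =
      X ^ (Fintype.card K ^ l - 1) + 1 := by
  have ht : 2 ≤ Fintype.card K ^ l := Fintype.one_lt_card.trans_le (Nat.le_self_pow (by omega) _)
  refine prod_roots_toFinset_X_sub_C_of_dvd_X_pow_card_sub_X
    (by simpa using monic_X_pow_add_C (1 : F) (n := Fintype.card K ^ l - 1) (by omega)) ?_
  rw [hF]
  exact (Dvd.intro_left X (X_mul_X_pow_sub_one_add_one (by omega))).trans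
    (X_pow_add_X_dvd_X_pow_sq_sub_X l)

theorem X_sub_C_pow_card_dvd_goppaSum {α : Fin n → F} {β : F} (hβ : ∀ i, α i ≠ β)
    (c : Fin n → K) (h : (X - C β) ^ (Fintype.card K - 1) ∣ goppaSum α c) :
    (X - C β) ^ Fintype.card K ∣ goppaSum α c := by
  rw [← goppaSum_algebraMap, X_sub_C_pow_dvd_goppaSum_iff hβ] at h ⊢
  intro k hk
  rcases (Nat.le_sub_one_of_lt hk).lt_or_eq with hk | rfl
  · exact h k hk
  calc ∑ i, algebraMap K F (c i) * (α i - β)⁻¹ ^ (Fintype.card K - 1 + 1)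
      = FiniteField.frobeniusAlgHom K F (∑ i, algebraMap K F (c i) * (α i - β)⁻¹ ^ (0 + 1)) := by
        simp only [map_sum, map_mul, AlgHom.commutes, FiniteField.frobeniusAlgHom_apply, zero_add,
          pow_one, inv_pow, Nat.sub_add_cancel Fintype.card_pos]
    _ = 0 := by rw [h 0 (Nat.sub_pos_of_lt Fintype.one_lt_card), map_zero]

theorem prod_X_sub_C_pow_card_dvd_goppaSum {α : Fin n → F} {B : Finset F} (hB : ∀ i, α i ∉ B)
    (c : Fin n → K) (h : (∏ β ∈ B, (X - C β)) ^ (Fintype.card K - 1) ∣ goppaSum α c) :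
    (∏ β ∈ B, (X - C β)) ^ Fintype.card K ∣ goppaSum α c := by
  refine prod_X_sub_C_pow_dvd fun β hβ => X_sub_C_pow_card_dvd_goppaSum ?_ c ?_
  · exact fun i hi => hB i (by rwa [hi])
  · exact (pow_dvd_pow_of_dvd (dvd_prod_of_mem (fun b => X - C b) hβ) _).trans h

/-- Indexed by `a : ℤ` so that the negative powers of the `αᵢ` are moments too. -/
noncomputable def goppaMoment (l : ℕ) (α : Fin n → F) (c : Fin n → K) (a : ℤ) : F :=
  ∑ i, algebraMap K F (c i) * α i ^ a / (α i ^ (Fintype.card K ^ l - 1) + 1) ^ Fintype.card K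

theorem goppaMoment_eq_of_modEq [Fintype F] {l : ℕ} {α : Fin n → F} (hα : ∀ i, α i ≠ 0)
    (c : Fin n → K) {a b : ℤ} (h : a ≡ b [ZMOD Fintype.card F - 1]) :
    goppaMoment l α c a = goppaMoment l α c b :=
  sum_congr rfl fun i _ => by rw [zpow_eq_zpow_of_modEq_card_sub_one (hα i) h]

theorem goppaMoment_pow [Fintype F] {l : ℕ} (hF : Fintype.card F = (Fintype.card K ^ l) ^ 2)
    {α : Fin n → F} (hα : ∀ i, α i ≠ 0) (c : Fin n → K) (a : ℤ) :
    goppaMoment l α c a ^ Fintype.card K ^ l = goppaMoment l α c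
      (((Fintype.card K ^ l : ℕ) : ℤ) * a + (Fintype.card K * (Fintype.card K ^ l - 1) : ℕ)) := by
  set t := Fintype.card K ^ l
  rw [goppaMoment, ← frobeniusAlgHom_pow_apply (K := K), map_sum]
  refine sum_congr rfl fun i _ => ?_
  have hgt : (α i ^ (t - 1) + 1) ^ t = (α i ^ (t - 1) + 1) / α i ^ (t - 1) :=
    eq_div_of_mul_eq (pow_ne_zero _ (hα i))
      (by rw [mul_comm]; exact pow_sub_one_mul_pow_sub_one_add_one_pow hF (hα i))
  rw [map_div₀, map_mul, map_pow, map_zpow₀, AlgHom.commutes, frobeniusAlgHom_pow_apply,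
    frobeniusAlgHom_pow_apply, hgt, zpow_add₀ (hα i), zpow_mul, zpow_natCast, zpow_natCast,
    mul_comm (Fintype.card K), pow_mul, div_pow, div_div_eq_mul_div, mul_assoc]

theorem sum_mul_inv_pow_eq_goppaMoment_add {l : ℕ} {α : Fin n → F} (hα : ∀ i, α i ≠ 0)
    (hαg : ∀ i, α i ^ (Fintype.card K ^ l - 1) + 1 ≠ 0) (c : Fin n → K) (k : ℕ) :
    ∑ i, algebraMap K F (c i) * (α i)⁻¹ ^ (k + 1) =
      goppaMoment l α c ((Fintype.card K * (Fintype.card K ^ l - 1) : ℕ) - (k + 1)) +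
        goppaMoment l α c (-(k + 1)) := by
  simp only [goppaMoment, ← sum_add_distrib]
  refine sum_congr rfl fun i _ => ?_
  set y := α i ^ (Fintype.card K ^ l - 1)
  have hyq : (y + 1) ^ Fintype.card K = y ^ Fintype.card K + 1 := by
    simpa using map_add (FiniteField.frobeniusAlgHom K F) y 1
  have hyq0 : y ^ Fintype.card K + 1 ≠ 0 := hyq ▸ pow_ne_zero _ (hαg i)
  have hpow : α i ^ (Fintype.card K * (Fintype.card K ^ l - 1)) = y ^ Fintype.card K := by
    rw [← pow_mul, mul_comm]
  rw [zpow_sub₀ (hα i), zpow_neg, zpow_natCast, ← Nat.cast_add_one, zpow_natCast, hpow, hyq]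
  field_simp
  ring

theorem sum_mul_inv_pow_eq_zero_of_goppaMoment_eq_zero [Fintype F] {l : ℕ} (hl : 1 ≤ l)
    (hF : Fintype.card F = (Fintype.card K ^ l) ^ 2) {α : Fin n → F} (hα : ∀ i, α i ≠ 0)
    (hαg : ∀ i, α i ^ (Fintype.card K ^ l - 1) + 1 ≠ 0) (c : Fin n → K)
    (hwin : ∀ a < Fintype.card K * (Fintype.card K ^ l - 1), goppaMoment l α c a = 0) :
    ∀ k < Fintype.card K - 1, ∑ i, algebraMap K F (c i) * (α i)⁻¹ ^ (k + 1) = 0 := by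
  intro k hk
  set q := Fintype.card K
  set t := q ^ l
  have hqt : q ≤ t := Nat.le_self_pow (by omega) q
  have htk : 0 < t * (k + 1) := by positivity
  have hbk : t * (k + 1) ≤ q * (t - 1) := calc
    t * (k + 1) ≤ t * (q - 1) := Nat.mul_le_mul_left _ (by omega)
    _ ≤ q * (t - 1) := by rw [Nat.mul_sub_one, Nat.mul_sub_one, mul_comm q t]; omega
  have hk1 : k + 1 ≤ q * (t - 1) := (Nat.le_mul_of_pos_left _ (by positivity)).trans hbk
  -- `a ↦ t a + q (t - 1)` carries `b` to `-(k + 1)` modulo `t² - 1`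
  set b := q * (t - 1) - t * (k + 1) with hb
  have hmod : -((k + 1 : ℕ) : ℤ) ≡ (t : ℤ) * b + (q * (t - 1) : ℕ) [ZMOD Fintype.card F - 1] := by
    refine Int.modEq_iff_dvd.2 ⟨q - (k + 1), ?_⟩
    rw [hF, hb]
    push_cast [hbk, show 1 ≤ t by omega]
    ring
  rw [sum_mul_inv_pow_eq_goppaMoment_add hα hαg, ← Nat.cast_add_one, ← Nat.cast_sub hk1,
    hwin _ (by omega), zero_add, goppaMoment_eq_of_modEq hα c hmod, ← goppaMoment_pow hF hα,
    hwin b (by omega), zero_pow (by positivity)]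

theorem X_pow_card_sub_one_dvd_goppaSum [Fintype F] {l : ℕ} (hl : 1 ≤ l)
    (hF : Fintype.card F = (Fintype.card K ^ l) ^ 2) {α : Fin n → F} (hα : ∀ i, α i ≠ 0)
    (hαg : ∀ i, α i ^ (Fintype.card K ^ l - 1) + 1 ≠ 0) (c : Fin n → K)
    (h : (X ^ (Fintype.card K ^ l - 1) + 1) ^ Fintype.card K ∣ goppaSum α c) :
    X ^ (Fintype.card K - 1) ∣ goppaSum α c := by
  rw [← goppaSum_algebraMap] at h ⊢
  rw [X_pow_dvd_goppaSum_iff hα]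
  refine sum_mul_inv_pow_eq_zero_of_goppaMoment_eq_zero hl hF hα hαg c fun a ha => ?_
  have hdeg : (X ^ a : F[X]).degree <
      ((X ^ (Fintype.card K ^ l - 1) + 1 : F[X]) ^ Fintype.card K).degree := by
    refine degree_lt_degree ?_
    have hg : (X ^ (Fintype.card K ^ l - 1) + 1 : F[X]).natDegree = Fintype.card K ^ l - 1 := by
      simpa using natDegree_X_pow_add_C (n := Fintype.card K ^ l - 1) (r := (1 : F))
    rwa [natDegree_X_pow, natDegree_pow, hg]
  simpa [goppaMoment] using sum_mul_eval_div_eval_eq_zero_of_dvd_goppaSum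
    (fun i => by simpa using pow_ne_zero (Fintype.card K) (hαg i)) h hdeg

end FiniteField

theorem goppa_G2_eq_G1_pow_q_sub_one_general {K F : Type*} [Field K] [Fintype K]
    [Field F] [Fintype F] [Algebra K F]
    (q l : ℕ) (hq : Fintype.card K = q) (hl : 1 ≤ l)
    (hF : Fintype.card F = (q ^ l) ^ 2)
    {n : ℕ} (α : Fin n → F)
    (hrange : ∀ x : F, x ∈ Set.range α ↔ (x ≠ 0 ∧ x ^ (q ^ l - 1) + 1 ≠ 0))
    (c : Fin n → K) :
    ((Polynomial.X ^ (q ^ l - 1) + 1) ^ (q - 1) ∣ goppaSum α c) ↔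
      ((Polynomial.X ^ (q ^ l) + Polynomial.X) ^ (q - 1) ∣ goppaSum α c) := by
  classical
  subst hq
  have hα i : α i ≠ 0 := ((hrange (α i)).1 ⟨i, rfl⟩).1
  have hαg i : α i ^ (Fintype.card K ^ l - 1) + 1 ≠ 0 := ((hrange (α i)).1 ⟨i, rfl⟩).2
  rw [← X_mul_X_pow_sub_one_add_one (Nat.one_le_pow _ _ Fintype.card_pos), mul_pow]
  refine ⟨fun h => ?_, (dvd_mul_left _ _).trans⟩
  have hgq : (X ^ (Fintype.card K ^ l - 1) + 1) ^ Fintype.card K ∣ goppaSum α c := by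
    rw [← prod_roots_toFinset_X_sub_C_X_pow_sub_one_add_one hl hF] at h ⊢
    refine prod_X_sub_C_pow_card_dvd_goppaSum (fun i hi => hαg i ?_) c h
    simpa using (mem_roots'.1 (Multiset.mem_toFinset.1 hi)).2
  have ht : 2 ≤ Fintype.card K ^ l := Fintype.one_lt_card.trans_le (Nat.le_self_pow (by omega) _)
  exact (isCoprime_X_X_pow_add_one (by omega)).pow.mul_dvd
    (X_pow_card_sub_one_dvd_goppaSum hl hF hα hαg c hgq) h

/-- with `t = q^l`, `F = GF(t²)` and `L` enumerating
`{α ∈ F : α ≠ 0 ∧ α^{t−1} + 1 ≠ 0}`, the codes `Γ(L, (X^t + X)^{q−1})` and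
`Γ(L, (X^{t−1} + 1)^{q−1})` coincide. -/
theorem goppa_G2_eq_G1_pow_q_sub_one {K F : Type*} [Field K] [Fintype K]
    [Field F] [Fintype F] [Algebra K F]
    (q l : ℕ) (hq : Fintype.card K = q) (hl : 1 ≤ l)
    (hF : Fintype.card F = (q ^ l) ^ 2)
    {n : ℕ} (α : Fin n → F) (hα : Function.Injective α)
    (hrange : ∀ x : F, x ∈ Set.range α ↔ (x ≠ 0 ∧ x ^ (q ^ l - 1) + 1 ≠ 0))
    (c : Fin n → K) :
    ((Polynomial.X ^ (q ^ l - 1) + 1) ^ (q - 1) ∣ goppaSum α c) ↔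
      ((Polynomial.X ^ (q ^ l) + Polynomial.X) ^ (q - 1) ∣ goppaSum α c) :=
  goppa_G2_eq_G1_pow_q_sub_one_general q l hq hl hF α hrange c
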